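/- arXiv:1906.06868 — 6 statements merged into one kernel-verified Lean document; each statement's English description precedes it below -/
import Mathlib

section
/- For every α ∈ (0,1) and every integer n ≥ 0, one has the identity ∑_{m=0}^{n} c_m^{n+1} m^{α} = (n+1)^{α} − ∑_{m=0}^{n} ((n+1−m)^{1−α} − (n−m)^{1−α}) ((m+1)^{α} − m^{α}). -/
/-!
Writing `a_m = (n+1-m)^{1-α} - (n-m)^{1-α}` and `a_{-1} = 0`, the coefficient `c_m^{n+1}` is the
backward difference `a_m - a_{m-1}`. Abel summation against `g_m = m^α` therefore turns
`∑ c_m^{n+1} g_m` into `a_n g_{n+1} - ∑ a_m (g_{m+1} - g_m)`, and `a_n = 1 - 0^{1-α} = 1`.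
-/

/-- The coefficients `c_m^{n+1}` of the discretization of the Caputo derivative. -/
noncomputable def caputoCoeff (α : ℝ) (n m : ℕ) : ℝ :=
  if m = 0 then ((n : ℝ) + 1) ^ (1 - α) - (n : ℝ) ^ (1 - α)
  else 2 * ((n : ℝ) + 1 - (m : ℝ)) ^ (1 - α) - ((n : ℝ) + 2 - (m : ℝ)) ^ (1 - α)
    - ((n : ℝ) - (m : ℝ)) ^ (1 - α)

open Finset

theorem sum_range_backwardDiff_mul_add_sum_mul_sub {R : Type*} [CommRing R] (a g : ℕ → R)
    (n : ℕ) :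
    ∑ m ∈ range (n + 1), (a m - if m = 0 then 0 else a (m - 1)) * g m
      + ∑ m ∈ range (n + 1), a m * (g (m + 1) - g m) = a n * g (n + 1) := by
  induction n with
  | zero => simp only [zero_add, range_one, sum_singleton, ↓reduceIte, sub_zero]; ring
  | succ n ih =>
    rw [sum_range_succ, sum_range_succ _ (n + 1), add_add_add_comm, ih]
    simp only [Nat.add_one_ne_zero, if_false, Nat.add_sub_cancel]
    ring

noncomputable def caputoWeight (α : ℝ) (n m : ℕ) : ℝ :=
  ((n : ℝ) + 1 - m) ^ (1 - α) - ((n : ℝ) - m) ^ (1 - α)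

theorem caputoCoeff_eq_backwardDiff (α : ℝ) (n m : ℕ) :
    caputoCoeff α n m
      = caputoWeight α n m - if m = 0 then 0 else caputoWeight α n (m - 1) := by
  cases m with
  | zero => simp [caputoCoeff, caputoWeight]
  | succ k =>
    simp only [caputoCoeff, caputoWeight, Nat.add_one_ne_zero, if_false, Nat.add_sub_cancel]
    rw [show (n : ℝ) + 2 - ↑(k + 1) = n + 1 - k by push_cast; ring,
      show (n : ℝ) + 1 - ↑(k + 1) = n - k by push_cast; ring]
    ring

theorem caputoWeight_self {α : ℝ} (hα : α ≠ 1) (n : ℕ) : caputoWeight α n n = 1 := by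
  simp [caputoWeight, Real.zero_rpow (sub_ne_zero.mpr hα.symm)]

/-- `∑_{m=0}^{n} c_m^{n+1} m^α
  = (n+1)^α − ∑_{m=0}^{n} ((n+1−m)^{1−α} − (n−m)^{1−α})((m+1)^α − m^α)`. -/
theorem coeff_weighted_sum_identity (α : ℝ) (hα : α ∈ Set.Ioo (0 : ℝ) 1) (n : ℕ) :
    ∑ m ∈ Finset.range (n + 1), caputoCoeff α n m * (m : ℝ) ^ α
      = ((n : ℝ) + 1) ^ α
        - ∑ m ∈ Finset.range (n + 1),
            (((n : ℝ) + 1 - (m : ℝ)) ^ (1 - α) - ((n : ℝ) - (m : ℝ)) ^ (1 - α))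
              * (((m : ℝ) + 1) ^ α - (m : ℝ) ^ α) := by
  have abel := sum_range_backwardDiff_mul_add_sum_mul_sub (caputoWeight α n)
    (fun m : ℕ => (m : ℝ) ^ α) n
  simp only [← caputoCoeff_eq_backwardDiff, caputoWeight_self hα.2.ne, one_mul,
    Nat.cast_add, Nat.cast_one] at abel
  rw [← abel]
  simp only [caputoWeight, add_sub_cancel_right]
end

section
/- For every α ∈ (0,1) and every integer n ≥ 0, one has the bound ∑_{m=0}^{n} c_m^{n+1} m^{α} ≤ (n+1)^{α} − α(1−α). -/
open Real Finset
open scoped fwdDiff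

theorem Finset.sum_range_fwdDiff_mul {R : Type*} [CommRing R] (a g : ℕ → R) (n : ℕ) :
    ∑ m ∈ range n, Δ_[1] a m * g (m + 1) =
      a n * g n - a 0 * g 0 - ∑ m ∈ range n, a m * Δ_[1] g m := by
  induction n with
  | zero => simp
  | succ n ih =>
    rw [sum_range_succ, sum_range_succ, ih]
    simp only [fwdDiff]
    ring

section RpowDifferences

variable {p x : ℝ}

/-- Bernoulli's inequality `(1 - t)^p ≤ 1 - p t`, applied with `t = 1/(x+1)`. -/
lemma mul_add_one_rpow_sub_one_le (hx : 0 ≤ x) (hp0 : 0 ≤ p) (hp1 : p ≤ 1) :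
    p * (x + 1) ^ (p - 1) ≤ (x + 1) ^ p - x ^ p := by
  have hx1 : 0 < x + 1 := by linarith
  have ht : (x + 1)⁻¹ ≤ 1 := inv_le_one_of_one_le₀ (by linarith)
  have bernoulli := rpow_one_add_le_one_add_mul_self (neg_le_neg ht) hp0 hp1
  have hsplit : x ^ p = (x + 1) ^ p * (1 + -(x + 1)⁻¹) ^ p := by
    rw [← mul_rpow hx1.le (by linarith)]
    congr 1
    field_simp
    ring
  calc p * (x + 1) ^ (p - 1) = (x + 1) ^ p - (x + 1) ^ p * (1 + p * -(x + 1)⁻¹) := by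
        rw [rpow_sub_one hx1.ne']
        field_simp
        ring
    _ ≤ (x + 1) ^ p - x ^ p := by
        rw [hsplit]
        gcongr

lemma mul_rpow_sub_one_le_fwdDiff_rpow {N : ℝ} (hx : 0 ≤ x) (hxN : x + 1 ≤ N)
    (hp0 : 0 ≤ p) (hp1 : p ≤ 1) :
    p * N ^ (p - 1) ≤ Δ_[1] (fun y : ℝ ↦ y ^ p) x :=
  calc p * N ^ (p - 1) ≤ p * (x + 1) ^ (p - 1) :=
        mul_le_mul_of_nonneg_left (rpow_le_rpow_of_nonpos (by linarith) hxN (by linarith)) hp0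
    _ ≤ Δ_[1] (fun y : ℝ ↦ y ^ p) x := mul_add_one_rpow_sub_one_le hx hp0 hp1

end RpowDifferences

lemma caputoCoeff_succ (α : ℝ) (n m : ℕ) :
    caputoCoeff α n (m + 1) =
      Δ_[1] (fun y : ℝ ↦ y ^ (1 - α)) (n - (m + 1 : ℕ)) -
        Δ_[1] (fun y : ℝ ↦ y ^ (1 - α)) (n - m) := by
  simp only [caputoCoeff, fwdDiff, Nat.succ_ne_zero]
  push_cast
  ring_nf

lemma sum_caputoCoeff_mul_rpow {α : ℝ} (hα0 : α ≠ 0) (hα1 : α ≠ 1) (n : ℕ) :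
    ∑ m ∈ range (n + 1), caputoCoeff α n m * (m : ℝ) ^ α =
      (n : ℝ) ^ α - ∑ m ∈ range n,
        Δ_[1] (fun y : ℝ ↦ y ^ (1 - α)) (n - m) * Δ_[1] (fun k : ℕ ↦ (k : ℝ) ^ α) m := by
  have h1α : 1 - α ≠ 0 := sub_ne_zero.mpr hα1.symm
  rw [sum_range_succ', Nat.cast_zero, zero_rpow hα0, mul_zero, add_zero]
  calc ∑ m ∈ range n, caputoCoeff α n (m + 1) * ((m + 1 : ℕ) : ℝ) ^ α
      = ∑ m ∈ range n, Δ_[1] (fun k : ℕ ↦ Δ_[1] (fun y : ℝ ↦ y ^ (1 - α)) (n - k)) m *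
          ((m + 1 : ℕ) : ℝ) ^ α := by
        simp only [caputoCoeff_succ]
        rfl
    _ = _ := (sum_range_fwdDiff_mul _ (fun k : ℕ ↦ (k : ℝ) ^ α) n).trans <| by
        simp [fwdDiff, zero_rpow hα0, zero_rpow h1α]

lemma mul_rpow_neg_le_sum_fwdDiff_mul {α : ℝ} (hα0 : 0 < α) (hα1 : α ≤ 1) (n : ℕ) :
    (1 - α) * ((n : ℝ) + 1) ^ (-α) * (n : ℝ) ^ α ≤ ∑ m ∈ range n,
      Δ_[1] (fun y : ℝ ↦ y ^ (1 - α)) (n - m) * Δ_[1] (fun k : ℕ ↦ (k : ℝ) ^ α) m := by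
  have htelescope : ∑ m ∈ range n, Δ_[1] (fun k : ℕ ↦ (k : ℝ) ^ α) m = (n : ℝ) ^ α :=
    (sum_range_sub (fun k : ℕ ↦ (k : ℝ) ^ α) n).trans (by simp [zero_rpow hα0.ne'])
  rw [← htelescope, mul_sum]
  refine sum_le_sum fun m hm ↦ ?_
  have hmn : (m : ℝ) + 1 ≤ n := by exact_mod_cast mem_range.mp hm
  have hincr : 0 ≤ Δ_[1] (fun k : ℕ ↦ (k : ℝ) ^ α) m := by
    simp only [fwdDiff, Nat.cast_succ, sub_nonneg]
    exact rpow_le_rpow m.cast_nonneg (by linarith) hα0.le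
  have hexp : -α = 1 - α - 1 := by ring
  rw [hexp]
  gcongr
  exact mul_rpow_sub_one_le_fwdDiff_rpow (by linarith) (by linarith) (by linarith) (by linarith)

lemma rpow_sub_mul_rpow_neg_mul_le {α x : ℝ} (hα0 : 0 ≤ α) (hα1 : α ≤ 1) (hx : 0 ≤ x) :
    x ^ α - (1 - α) * (x + 1) ^ (-α) * x ^ α ≤ (x + 1) ^ α - α * (1 - α) := by
  have hx1 : 0 < x + 1 := by linarith
  have hincr : α / (x + 1) ≤ (x + 1) ^ α - x ^ α := by
    refine le_trans ?_ (mul_add_one_rpow_sub_one_le hx hα0 hα1)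
    rw [rpow_sub_one hx1.ne', mul_div_assoc']
    gcongr
    exact le_mul_of_one_le_right hα0 (one_le_rpow (by linarith) hα0)
  have hratio : x / (x + 1) ≤ (x + 1) ^ (-α) * x ^ α := by
    calc x / (x + 1) ≤ (x / (x + 1)) ^ α :=
          self_le_rpow_of_le_one (by positivity)
            (div_le_one_of_le₀ (le_add_of_nonneg_right zero_le_one) hx1.le) hα1
      _ = (x + 1) ^ (-α) * x ^ α := by
          rw [div_rpow hx hx1.le, rpow_neg hx1.le, div_eq_inv_mul]
  have hconvex : α * (1 - α) ≤ α / (x + 1) + (1 - α) * (x / (x + 1)) := by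
    rw [mul_div_assoc', ← add_div, le_div_iff₀ hx1]
    nlinarith [sq_nonneg α, mul_nonneg (sq_nonneg (1 - α)) hx]
  linarith [mul_le_mul_of_nonneg_left hratio (sub_nonneg.mpr hα1)]

/-- `∑_{m=0}^{n} c_m^{n+1} m^α ≤ (n+1)^α − α(1−α)`. -/
theorem coeff_weighted_sum_bound (α : ℝ) (hα : α ∈ Set.Ioo (0 : ℝ) 1) (n : ℕ) :
    ∑ m ∈ Finset.range (n + 1), caputoCoeff α n m * (m : ℝ) ^ α
      ≤ ((n : ℝ) + 1) ^ α - α * (1 - α) := by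
  obtain ⟨hα0, hα1⟩ := hα
  rw [sum_caputoCoeff_mul_rpow hα0.ne' hα1.ne n]
  calc _ ≤ (n : ℝ) ^ α - (1 - α) * ((n : ℝ) + 1) ^ (-α) * (n : ℝ) ^ α :=
        sub_le_sub_left (mul_rpow_neg_le_sum_fwdDiff_mul hα0 hα1.le n) _
    _ ≤ _ := rpow_sub_mul_rpow_neg_mul_le hα0.le hα1.le n.cast_nonneg
end

section
/- Let α ∈ (0,1), Δt, h > 0, ρ_α = Γ(2−α)Δt^α, and let H : ℝ → ℝ be differentiable, nonincreasing (H' ≤ 0), with |H'(p)| ≤ L for all p. If the CFL condition (Δt^α/h) L ≤ (2 − 2^{1−α})/Γ(2−α) holds, then the upwind scheme map (U^0,…,U^n) ↦ G^n(𝒰), defined on one-dimensional periodic grid functions by G^n(𝒰)_j = ∑_{m=0}^{n} c_m^{n+1} U^m_j − ρ_α H((U^n_{j+1} − U^n_j)/h), is monotone: if U^m ≤ V^m componentwise for all m = 0,…,n, then G^n(𝒰) ≤ G^n(𝒱) componentwise. -/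
lemma caputoCoeff_nonneg (α : ℝ) (hα : α ∈ Set.Ioo (0 : ℝ) 1) (n m : ℕ) (hm : m ≤ n) :
    0 ≤ caputoCoeff α n m := by
  obtain ⟨h0, h1⟩ := hα
  unfold caputoCoeff
  split_ifs with hm0
  · have := Real.rpow_le_rpow (z := 1 - α) (Nat.cast_nonneg n)
      (by linarith [Nat.cast_nonneg (α := ℝ) n] : (n : ℝ) ≤ (n : ℝ) + 1)
      (by linarith : (0:ℝ) ≤ 1 - α)
    linarith
  · have hmn : (m : ℝ) ≤ n := Nat.cast_le.2 hm
    have hx : (0 : ℝ) ≤ (n : ℝ) - m := by linarith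
    have hy : (0 : ℝ) ≤ (n : ℝ) + 2 - m := by linarith
    have hcon := (Real.strictConcaveOn_rpow (by linarith : (0:ℝ) < 1 - α)
      (by linarith : (1:ℝ) - α < 1)).concaveOn
    have key := hcon.2 (Set.mem_Ici.2 hx) (Set.mem_Ici.2 hy)
      (by norm_num : (0:ℝ) ≤ (1:ℝ)/2) (by norm_num : (0:ℝ) ≤ (1:ℝ)/2) (by norm_num)
    simp only [smul_eq_mul] at key
    have heq : (1/2 : ℝ) * ((n : ℝ) - m) + (1/2 : ℝ) * ((n : ℝ) + 2 - m)
        = (n : ℝ) + 1 - m := by ring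
    rw [heq] at key
    linarith

lemma caputoCoeff_last_ge (α : ℝ) (hα : α ∈ Set.Ioo (0 : ℝ) 1) (n : ℕ) :
    2 - (2 : ℝ) ^ (1 - α) ≤ caputoCoeff α n n := by
  obtain ⟨h0, h1⟩ := hα
  have h2 : (1 : ℝ) ≤ (2 : ℝ) ^ (1 - α) := Real.one_le_rpow (by norm_num) (by linarith)
  unfold caputoCoeff
  rcases Nat.eq_zero_or_pos n with rfl | hn
  · rw [if_pos rfl]
    push_cast
    rw [zero_add, Real.one_rpow, Real.zero_rpow (by linarith : (1:ℝ) - α ≠ 0)]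
    linarith
  · rw [if_neg (Nat.pos_iff_ne_zero.1 hn)]
    have e1 : (n : ℝ) + 1 - n = 1 := by ring
    have e2 : (n : ℝ) + 2 - n = 2 := by ring
    have e3 : (n : ℝ) - n = 0 := by ring
    rw [e1, e2, e3, Real.one_rpow, Real.zero_rpow (by linarith : (1:ℝ) - α ≠ 0)]
    linarith

/-- under the CFL condition `(Δt^α/h) L ≤ (2 − 2^{1−α})/Γ(2−α)`, the upwind
scheme `G^n(𝒰)_j = ∑_{m=0}^n c_m^{n+1} U^m_j − ρ_α H((U^n_{j+1} − U^n_j)/h)` for a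
nonincreasing Hamiltonian `H` with `|H'| ≤ L` is monotone. -/
theorem upwind_monotone (α Δt h : ℝ) (hα : α ∈ Set.Ioo (0 : ℝ) 1)
    (hΔt : 0 < Δt) (hh : 0 < h)
    (H H' : ℝ → ℝ) (hderiv : ∀ p, HasDerivAt H (H' p) p)
    (hdec : ∀ p, H' p ≤ 0) (L : ℝ) (hL : ∀ p, |H' p| ≤ L)
    (hCFL : Δt ^ α / h * L ≤ (2 - (2 : ℝ) ^ (1 - α)) / Real.Gamma (2 - α))
    (M : ℕ) (n : ℕ) (U V : ℕ → ZMod M → ℝ)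
    (hUV : ∀ m ≤ n, ∀ j, U m j ≤ V m j) :
    ∀ j : ZMod M,
      (∑ m ∈ Finset.range (n + 1), caputoCoeff α n m * U m j)
          - Real.Gamma (2 - α) * Δt ^ α * H ((U n (j + 1) - U n j) / h)
        ≤ (∑ m ∈ Finset.range (n + 1), caputoCoeff α n m * V m j)
            - Real.Gamma (2 - α) * Δt ^ α * H ((V n (j + 1) - V n j) / h) := by
  obtain ⟨hα0, hα1⟩ := hα
  have hΓ : 0 < Real.Gamma (2 - α) := Real.Gamma_pos_of_pos (by linarith)
  set ρ := Real.Gamma (2 - α) * Δt ^ α with hρ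
  have hρpos : 0 < ρ := by positivity
  have hL0 : 0 ≤ L := le_trans (abs_nonneg _) (hL 0)
  set c := caputoCoeff α n n with hc
  -- CFL rewritten : ρ * L / h ≤ c
  have hcfl : ρ * L / h ≤ c := by
    have h1 := mul_le_mul_of_nonneg_left hCFL hΓ.le
    have h2 : Real.Gamma (2 - α) * ((2 - (2:ℝ) ^ (1 - α)) / Real.Gamma (2 - α))
        = 2 - (2:ℝ) ^ (1 - α) := by field_simp
    have h3 := caputoCoeff_last_ge α ⟨hα0, hα1⟩ n
    have h4 : ρ * L / h = Real.Gamma (2 - α) * (Δt ^ α / h * L) := by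
      field_simp [hρ]; ring
    rw [h4]; linarith
  -- Antitonicity of H
  have hH : Antitone H :=
    antitone_of_deriv_nonpos (fun x => (hderiv x).differentiableAt)
      (fun x => by rw [(hderiv x).deriv]; exact hdec x)
  -- Monotonicity of a ↦ c * a - ρ * H ((b - a)/h)
  have hg : ∀ b : ℝ, Monotone (fun a : ℝ => c * a - ρ * H ((b - a) / h)) := by
    intro b
    have hgd : ∀ a : ℝ, HasDerivAt (fun a : ℝ => c * a - ρ * H ((b - a) / h))
        (c + ρ * H' ((b - a) / h) / h) a := by
      intro a
      have h1 : HasDerivAt (fun a : ℝ => (b - a) / h) (-1 / h) a := by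
        simpa using ((hasDerivAt_id a).const_sub b).div_const h
      have h2 := (hderiv ((b - a) / h)).comp a h1
      have h3 : HasDerivAt (fun a : ℝ => c * a) c a := by
        simpa using (hasDerivAt_id a).const_mul c
      have h4 := h3.sub (h2.const_mul ρ)
      exact h4.congr_deriv (by ring)
    apply monotone_of_deriv_nonneg (fun a => (hgd a).differentiableAt)
    intro a
    rw [(hgd a).deriv]
    set q := (b - a) / h
    have hq1 : -L ≤ H' q := (abs_le.1 (hL q)).1
    have hq2 : ρ * (-L) ≤ ρ * H' q := mul_le_mul_of_nonneg_left hq1 hρpos.le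
    have hq3 : ρ * (-L) / h ≤ ρ * H' q / h := div_le_div_of_nonneg_right hq2 hh.le
    have : -(ρ * L / h) = ρ * (-L) / h := by ring
    linarith
  intro j
  rw [Finset.sum_range_succ, Finset.sum_range_succ]
  have hsum : ∑ m ∈ Finset.range n, caputoCoeff α n m * U m j
      ≤ ∑ m ∈ Finset.range n, caputoCoeff α n m * V m j := by
    apply Finset.sum_le_sum
    intro m hm
    exact mul_le_mul_of_nonneg_left (hUV m (le_of_lt (Finset.mem_range.1 hm)) j)
      (caputoCoeff_nonneg α ⟨hα0, hα1⟩ n m (le_of_lt (Finset.mem_range.1 hm)))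
  -- step over the neighbor value
  have t1 : c * U n j - ρ * H ((U n (j + 1) - U n j) / h)
      ≤ c * U n j - ρ * H ((V n (j + 1) - U n j) / h) := by
    have hle : (U n (j + 1) - U n j) / h ≤ (V n (j + 1) - U n j) / h := by
      apply div_le_div_of_nonneg_right _ hh.le
      linarith [hUV n le_rfl (j + 1)]
    have := hH hle
    nlinarith
  have t2 : c * U n j - ρ * H ((V n (j + 1) - U n j) / h)
      ≤ c * V n j - ρ * H ((V n (j + 1) - V n j) / h) :=
    hg (V n (j + 1)) (hUV n le_rfl j)
  linarith
end

section
/- Let α ∈ (0,1), Δt, h > 0, ρ_α = Γ(2−α)Δt^α, θ ∈ ℝ, and let H : ℝ → ℝ be differentiable with |H'(p)| ≤ L for all p. If the CFL condition (Γ(2−α)Δt^α/(2h)) L ≤ θ ≤ 1 − 2^{−α} holds, then the Lax-Friedrichs scheme map (U^0,…,U^n) ↦ G^n(𝒰), defined on one-dimensional periodic grid functions by G^n(𝒰)_j = ∑_{m=0}^{n} c_m^{n+1} U^m_j − ρ_α H((U^n_{j+1} − U^n_{j−1})/(2h)) + θ(U^n_{j+1} + U^n_{j−1} − 2U^n_j),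 is monotone: if U^m ≤ V^m componentwise for all m = 0,…,n, then G^n(𝒰) ≤ G^n(𝒱) componentwise. -/
/-- under the CFL condition `Γ(2−α)Δt^α L/(2h) ≤ θ ≤ 1 − 2^{−α}`, the
Lax-Friedrichs scheme
`G^n(𝒰)_j = ∑_m c_m^{n+1} U^m_j − ρ_α H((U^n_{j+1} − U^n_{j−1})/(2h))
  + θ(U^n_{j+1} + U^n_{j−1} − 2U^n_j)` is monotone. -/
theorem laxFriedrichs_monotone (α Δt h θ : ℝ) (hα : α ∈ Set.Ioo (0 : ℝ) 1)
    (hΔt : 0 < Δt) (hh : 0 < h)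
    (H H' : ℝ → ℝ) (hderiv : ∀ p, HasDerivAt H (H' p) p)
    (L : ℝ) (hL : ∀ p, |H' p| ≤ L)
    (hCFL₁ : Real.Gamma (2 - α) * Δt ^ α / (2 * h) * L ≤ θ)
    (hCFL₂ : θ ≤ 1 - (2 : ℝ) ^ (-α))
    (M : ℕ) (n : ℕ) (U V : ℕ → ZMod M → ℝ)
    (hUV : ∀ m ≤ n, ∀ j, U m j ≤ V m j) :
    ∀ j : ZMod M,
      (∑ m ∈ Finset.range (n + 1), caputoCoeff α n m * U m j)
          - Real.Gamma (2 - α) * Δt ^ α * H ((U n (j + 1) - U n (j - 1)) / (2 * h))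
          + θ * (U n (j + 1) + U n (j - 1) - 2 * U n j)
        ≤ (∑ m ∈ Finset.range (n + 1), caputoCoeff α n m * V m j)
            - Real.Gamma (2 - α) * Δt ^ α * H ((V n (j + 1) - V n (j - 1)) / (2 * h))
            + θ * (V n (j + 1) + V n (j - 1) - 2 * V n j) := by
  obtain ⟨hα0, hα1⟩ := hα
  intro j
  have hβ0 : (0:ℝ) < 1 - α := by linarith
  have hβ1 : (1:ℝ) - α ≤ 1 := by linarith
  have hρ : 0 < Real.Gamma (2 - α) * Δt ^ α :=
    mul_pos (Real.Gamma_pos_of_pos (by linarith)) (Real.rpow_pos_of_pos hΔt α)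
  have hL0 : (0:ℝ) ≤ L := (abs_nonneg _).trans (hL 0)
  set ρ := Real.Gamma (2 - α) * Δt ^ α with hρdef
  -- midpoint concavity of x ↦ x^(1-α)
  have hconc : ∀ x : ℝ, 0 ≤ x →
      (x + 2) ^ (1 - α) + x ^ (1 - α) ≤ 2 * (x + 1) ^ (1 - α) := by
    intro x hx
    have hmem1 : x ∈ Set.Ici (0:ℝ) := hx
    have hmem2 : x + 2 ∈ Set.Ici (0:ℝ) := by simp only [Set.mem_Ici]; linarith
    have h := (Real.concaveOn_rpow hβ0.le hβ1).2 hmem1 hmem2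
      (by norm_num : (0:ℝ) ≤ 1/2) (by norm_num : (0:ℝ) ≤ 1/2) (by norm_num)
    simp only [smul_eq_mul] at h
    have he : (1/2 : ℝ) * x + 1/2 * (x + 2) = x + 1 := by ring
    rw [he] at h
    linarith
  -- nonnegativity of coefficients
  have hc : ∀ m, m ≤ n → 0 ≤ caputoCoeff α n m := by
    intro m hm
    unfold caputoCoeff
    split_ifs with h0
    · have : ((n:ℝ)) ^ (1-α) ≤ ((n:ℝ)+1) ^ (1-α) :=
        Real.rpow_le_rpow (Nat.cast_nonneg n) (by linarith) hβ0.le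
      linarith
    · have hmn : (m:ℝ) ≤ (n:ℝ) := Nat.cast_le.2 hm
      have hcc := hconc ((n:ℝ) - m) (by linarith)
      have e1 : (n:ℝ) - m + 2 = (n:ℝ) + 2 - m := by ring
      have e2 : (n:ℝ) - m + 1 = (n:ℝ) + 1 - m := by ring
      rw [e1, e2] at hcc
      linarith
  have h2β : (2:ℝ) ^ ((1:ℝ) - α) = 2 * (2:ℝ) ^ (-α) := by
    rw [show (1:ℝ) - α = 1 + (-α) by ring, Real.rpow_add (by norm_num), Real.rpow_one]
  have h2b : 2 * θ ≤ 2 - (2:ℝ) ^ ((1:ℝ) - α) := by rw [h2β]; linarith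
  -- the last coefficient dominates 2θ
  have hcn : 2 * θ ≤ caputoCoeff α n n := by
    unfold caputoCoeff
    split_ifs with h0
    · have h21 : (1:ℝ) ≤ (2:ℝ) ^ ((1:ℝ) - α) :=
        Real.one_le_rpow (by norm_num) hβ0.le
      rw [h0]
      norm_num [Real.zero_rpow hβ0.ne', Real.one_rpow]
      linarith
    · have e1 : (n:ℝ) + 1 - n = 1 := by ring
      have e2 : (n:ℝ) + 2 - n = 2 := by ring
      have e3 : (n:ℝ) - (n:ℝ) = 0 := by ring
      rw [e1, e2, e3, Real.one_rpow, Real.zero_rpow hβ0.ne']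
      linarith
  -- Lipschitz bound on H
  have hlip : ∀ x y : ℝ, |H y - H x| ≤ L * |y - x| := by
    intro x y
    have hmvt := Convex.norm_image_sub_le_of_norm_hasDerivWithin_le
      (f := H) (f' := H') (s := (Set.univ : Set ℝ)) (C := L)
      (fun p _ => (hderiv p).hasDerivWithinAt)
      (fun p _ => by simpa [Real.norm_eq_abs] using hL p)
      convex_univ (Set.mem_univ x) (Set.mem_univ y)
    simpa [Real.norm_eq_abs] using hmvt
  -- abbreviations
  set pU := (U n (j + 1) - U n (j - 1)) / (2 * h) with hpU
  set pV := (V n (j + 1) - V n (j - 1)) / (2 * h) with hpV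
  set a := V n (j + 1) - U n (j + 1) with ha
  set b := V n (j - 1) - U n (j - 1) with hb
  set c := V n j - U n j with hcdef
  have ha0 : 0 ≤ a := sub_nonneg.2 (hUV n le_rfl _)
  have hb0 : 0 ≤ b := sub_nonneg.2 (hUV n le_rfl _)
  have hc0 : 0 ≤ c := sub_nonneg.2 (hUV n le_rfl _)
  -- sum decomposition
  have hsum : (∑ m ∈ Finset.range (n+1), caputoCoeff α n m * V m j)
      - ∑ m ∈ Finset.range (n+1), caputoCoeff α n m * U m j
      = (∑ m ∈ Finset.range n, caputoCoeff α n m * (V m j - U m j))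
        + caputoCoeff α n n * c := by
    rw [← Finset.sum_sub_distrib, Finset.sum_range_succ]
    congr 1
    · exact Finset.sum_congr rfl fun m _ => by ring
    · rw [hcdef]; ring
  have hsum0 : 0 ≤ ∑ m ∈ Finset.range n, caputoCoeff α n m * (V m j - U m j) :=
    Finset.sum_nonneg fun m hm =>
      mul_nonneg (hc m (le_of_lt (Finset.mem_range.1 hm)))
        (sub_nonneg.2 (hUV m (le_of_lt (Finset.mem_range.1 hm)) j))
  -- Hamiltonian estimate
  have hab : |a - b| ≤ a + b := abs_le.2 ⟨by linarith, by linarith⟩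
  have hdiff : pV - pU = (a - b) / (2 * h) := by
    rw [hpU, hpV, ha, hb]; field_simp; ring
  have hKθ : ρ / (2 * h) * L ≤ θ := hCFL₁
  have hK0 : 0 ≤ ρ / (2 * h) * L := by positivity
  have hH : ρ * (H pV - H pU) ≤ θ * (a + b) := by
    have h1 : H pV - H pU ≤ |H pV - H pU| := le_abs_self _
    have h2 : |H pV - H pU| ≤ L * |pV - pU| := hlip pU pV
    have h4 : |pV - pU| = |a - b| / (2 * h) := by
      rw [hdiff, abs_div, abs_of_pos (by linarith : (0:ℝ) < 2 * h)]
    calc ρ * (H pV - H pU) ≤ ρ * (L * (|a - b| / (2 * h))) := by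
          apply mul_le_mul_of_nonneg_left _ hρ.le
          rw [← h4]; exact h1.trans h2
      _ = (ρ / (2 * h) * L) * |a - b| := by field_simp
      _ ≤ θ * |a - b| := mul_le_mul_of_nonneg_right hKθ (abs_nonneg _)
      _ ≤ θ * (a + b) := mul_le_mul_of_nonneg_left hab (le_trans hK0 hKθ)
  have hcnc : 2 * θ * c ≤ caputoCoeff α n n * c := mul_le_mul_of_nonneg_right hcn hc0
  rw [← sub_nonneg]
  have expand : ((∑ m ∈ Finset.range (n + 1), caputoCoeff α n m * V m j)
            - ρ * H pV + θ * (V n (j + 1) + V n (j - 1) - 2 * V n j))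
      - ((∑ m ∈ Finset.range (n + 1), caputoCoeff α n m * U m j)
            - ρ * H pU + θ * (U n (j + 1) + U n (j - 1) - 2 * U n j))
      = ((∑ m ∈ Finset.range (n + 1), caputoCoeff α n m * V m j)
          - ∑ m ∈ Finset.range (n + 1), caputoCoeff α n m * U m j)
        - ρ * (H pV - H pU) + θ * (a + b - 2 * c) := by
    rw [ha, hb, hcdef]; ring
  rw [expand, hsum]
  nlinarith [hsum0, hH, hcnc]
end

section
/- Let α ∈ (0,1), T > 0, and let φ : [0,T] → ℝ be continuously differentiable. Let t ∈ (0,T), let (Δt_k) be a sequence of positive reals with Δt_k → 0, let (t_k) be a sequence in (0,T) with t_k → t, and set n_k + 1 = ⌊t_k/Δt_k⌋. Then the discrete Caputo derivative converges to the continuous one: (1/(Γ(2−α)Δt_k^α)) (φ((n_k+1)Δt_k) − ∑_{m=0}^{n_k} c_m^{n_k+1} φ(mΔt_k)) → (1/Γ(1−α)) ∫_0^t φ'(s)(t−s)^{−α} ds as k → ∞. -/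
open Filter MeasureTheory

lemma abel_sum (α : ℝ) (hα : α < 1) (n : ℕ) (a : ℕ → ℝ) :
    a (n+1) - ∑ m ∈ Finset.range (n+1), caputoCoeff α n m * a m
      = ∑ m ∈ Finset.range (n+1),
          ((((n:ℝ)+1-m) ^ (1-α) - ((n:ℝ)-m) ^ (1-α)) * (a (m+1) - a m)) := by
  set B : ℕ → ℝ := fun m => ((n:ℝ)+1-m) ^ (1-α) - ((n:ℝ)-m) ^ (1-α) with hB
  set C : ℕ → ℝ := fun m => ((n:ℝ)+2-m) ^ (1-α) - ((n:ℝ)+1-m) ^ (1-α) with hC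
  have hCB : ∀ m : ℕ, C (m+1) = B m := by
    intro m
    simp only [hB, hC]
    push_cast
    have h1 : (n:ℝ)+2-((m:ℝ)+1) = (n:ℝ)+1-(m:ℝ) := by ring
    have h2 : (n:ℝ)+1-((m:ℝ)+1) = (n:ℝ)-(m:ℝ) := by ring
    rw [h1, h2]
  have hCn : C (n+1) = 1 := by
    simp only [hC]
    push_cast
    have h1 : (n:ℝ)+2-((n:ℝ)+1) = 1 := by ring
    have h2 : (n:ℝ)+1-((n:ℝ)+1) = 0 := by ring
    rw [h1, h2, Real.one_rpow, Real.zero_rpow (by linarith : (1:ℝ)-α ≠ 0), sub_zero]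
  have hc : ∀ m ∈ Finset.range (n+1), caputoCoeff α n m * a m
      = (B m - C m) * a m + (if m = 0 then C 0 * a 0 else 0) := by
    intro m _
    rcases Nat.eq_zero_or_pos m with hm | hm
    · subst hm
      simp only [caputoCoeff, hB, hC, Nat.cast_zero, sub_zero, eq_self_iff_true, if_true]
      ring
    · rw [caputoCoeff, if_neg (Nat.pos_iff_ne_zero.mp hm), if_neg (Nat.pos_iff_ne_zero.mp hm)]
      simp only [hB, hC]
      ring
  rw [Finset.sum_congr rfl hc, Finset.sum_add_distrib]
  rw [Finset.sum_ite_eq' (Finset.range (n+1)) 0 (fun _ => C 0 * a 0)]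
  rw [if_pos (Finset.mem_range.mpr (Nat.succ_pos n))]
  have key : ∑ m ∈ Finset.range (n+1), B m * a (m+1)
      = ∑ m ∈ Finset.range (n+1), C m * a m + a (n+1) - C 0 * a 0 := by
    have h := Finset.sum_range_succ' (fun m => C m * a m) (n+1)
    rw [Finset.sum_range_succ (fun m => C m * a m) (n+1)] at h
    have h2 : ∀ m, C (m+1) * a (m+1) = B m * a (m+1) := fun m => by rw [hCB]
    simp only [h2] at h
    have h3 : B n * a (n+1) = a (n+1) := by rw [← hCB n, hCn, one_mul]
    rw [h3] at h
    linarith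
  have expand : ∑ m ∈ Finset.range (n+1), B m * (a (m+1) - a m)
      = ∑ m ∈ Finset.range (n+1), B m * a (m+1) - ∑ m ∈ Finset.range (n+1), B m * a m := by
    rw [← Finset.sum_sub_distrib]; congr 1; ext m; ring
  have expand2 : ∑ m ∈ Finset.range (n+1), (B m - C m) * a m
      = ∑ m ∈ Finset.range (n+1), B m * a m - ∑ m ∈ Finset.range (n+1), C m * a m := by
    rw [← Finset.sum_sub_distrib]; congr 1; ext m; ring
  rw [expand2] at *
  rw [expand, key]
  ring

lemma abel_sum' (α : ℝ) (hα : α < 1) (n : ℕ) (a : ℕ → ℝ) :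
    a (n+1) - ∑ m ∈ Finset.range (n+1), caputoCoeff α n m * a m
      = ∑ j ∈ Finset.range (n+1),
          ((((j:ℝ)+1) ^ (1-α) - (j:ℝ) ^ (1-α)) * (a (n+1-j) - a (n-j))) := by
  rw [abel_sum α hα n a,
    ← Finset.sum_range_reflect
      (fun j => (((j:ℝ)+1) ^ (1-α) - (j:ℝ) ^ (1-α)) * (a (n+1-j) - a (n-j))) (n+1)]
  apply Finset.sum_congr rfl
  intro m hm
  have hm' : m ≤ n := Nat.lt_succ_iff.mp (Finset.mem_range.mp hm)
  have e1 : n + 1 - 1 - m = n - m := by omega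
  have e2 : n + 1 - (n - m) = m + 1 := by omega
  have e3 : n - (n - m) = m := by omega
  rw [e1, e2, e3]
  have e4 : ((n - m : ℕ) : ℝ) = (n : ℝ) - m := by
    rw [Nat.cast_sub hm']
  rw [e4]
  have e5 : (n : ℝ) - m + 1 = (n : ℝ) + 1 - m := by ring
  rw [e5]

set_option maxHeartbeats 1000000

/-- convergence of the discrete Caputo derivative of a `C¹` test function to
the continuous Caputo derivative: if `Δt_k → 0`, `t_k → t ∈ (0,T)` and
`n_k + 1 = ⌊t_k/Δt_k⌋`, then
`(1/(Γ(2−α)Δt_k^α)) (φ((n_k+1)Δt_k) − ∑_{m=0}^{n_k} c_m^{n_k+1} φ(mΔt_k))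
  → (1/Γ(1−α)) ∫_0^t φ'(s)(t−s)^{−α} ds`. -/
theorem discrete_caputo_convergence (α T : ℝ) (hα : α ∈ Set.Ioo (0 : ℝ) 1) (hT : 0 < T)
    (φ φ' : ℝ → ℝ)
    (hderiv : ∀ s ∈ Set.Icc (0 : ℝ) T, HasDerivAt φ (φ' s) s)
    (hcont : ContinuousOn φ' (Set.Icc (0 : ℝ) T))
    (t : ℝ) (ht : t ∈ Set.Ioo (0 : ℝ) T)
    (Δt : ℕ → ℝ) (hΔt : ∀ k, 0 < Δt k) (hΔt0 : Tendsto Δt atTop (nhds 0))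
    (tk : ℕ → ℝ) (htk : ∀ k, tk k ∈ Set.Ioo (0 : ℝ) T)
    (htkt : Tendsto tk atTop (nhds t))
    (nk : ℕ → ℕ) (hnk : ∀ k, (nk k : ℤ) + 1 = ⌊tk k / Δt k⌋) :
    Tendsto (fun k =>
        (1 / (Real.Gamma (2 - α) * Δt k ^ α))
          * (φ (((nk k : ℝ) + 1) * Δt k)
            - ∑ m ∈ Finset.range (nk k + 1), caputoCoeff α (nk k) m * φ ((m : ℝ) * Δt k)))
      atTop
      (nhds ((1 / Real.Gamma (1 - α)) * ∫ s in (0 : ℝ)..t, φ' s * (t - s) ^ (-α))) := by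
  obtain ⟨hα0, hα1⟩ := hα
  obtain ⟨ht0, htT⟩ := ht
  have h1α : (0:ℝ) < 1 - α := by linarith
  have h1α' : (1:ℝ) - α ≠ 0 := ne_of_gt h1α
  have hrneg : (-1:ℝ) < -α := by linarith
  have hΓpos : 0 < Real.Gamma (1 - α) := Real.Gamma_pos_of_pos h1α
  have hΓ2 : Real.Gamma (2 - α) = (1 - α) * Real.Gamma (1 - α) := by
    have h : (2:ℝ) - α = (1 - α) + 1 := by ring
    rw [h, Real.Gamma_add_one h1α']
  -- bound on φ'
  obtain ⟨M, hM⟩ : ∃ M, ∀ s ∈ Set.Icc (0:ℝ) T, |φ' s| ≤ M := by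
    obtain ⟨M, hM⟩ := (isCompact_Icc (a := (0:ℝ)) (b := T)).exists_bound_of_continuousOn hcont
    exact ⟨M, fun s hs => by simpa using hM s hs⟩
  have hM0 : 0 ≤ M := le_trans (abs_nonneg _) (hM 0 ⟨le_refl _, hT.le⟩)
  -- the discrete time T_k = (n_k + 1) Δt_k
  set Tn : ℕ → ℝ := fun k => ((nk k : ℝ) + 1) * Δt k with hTndef
  have hTn_le : ∀ k, Tn k ≤ tk k := by
    intro k
    have h := Int.floor_le (tk k / Δt k)
    rw [← hnk k] at h
    push_cast at h
    calc Tn k = ((nk k : ℝ) + 1) * Δt k := rfl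
      _ ≤ (tk k / Δt k) * Δt k := by
          apply mul_le_mul_of_nonneg_right h (hΔt k).le
      _ = tk k := div_mul_cancel₀ _ (hΔt k).ne'
  have hTn_gt : ∀ k, tk k - Δt k < Tn k := by
    intro k
    have h := Int.lt_floor_add_one (tk k / Δt k)
    rw [← hnk k] at h
    push_cast at h
    have h2 : tk k < ((nk k : ℝ) + 1 + 1) * Δt k := by
      rw [← div_lt_iff₀ (hΔt k)] at *
      linarith
    have := hΔt k
    simp only [hTndef]
    nlinarith
  have hTn_pos : ∀ k, 0 < Tn k := by
    intro k
    exact mul_pos (by positivity) (hΔt k)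
  have hTn_ltT : ∀ k, Tn k < T := fun k => lt_of_le_of_lt (hTn_le k) (htk k).2
  have hTnt : Tendsto Tn atTop (nhds t) := by
    have hlow : Tendsto (fun k => tk k - Δt k) atTop (nhds t) := by
      have := htkt.sub hΔt0
      simpa using this
    exact tendsto_of_tendsto_of_tendsto_of_le_of_le (f := Tn) hlow htkt
      (fun k => (hTn_gt k).le) hTn_le
  -- the step functions
  set q : ℕ → ℕ → ℝ := fun k j =>
    (φ (((nk k : ℝ) + 1 - j) * Δt k) - φ (((nk k : ℝ) - j) * Δt k)) / Δt k with hqdef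
  set f : ℕ → ℝ → ℝ := fun k s => ∑ j ∈ Finset.range (nk k + 1),
    Set.indicator (Set.Ioc ((j:ℝ) * Δt k) (((j:ℝ)+1) * Δt k))
      (fun s => q k j * s ^ (-α)) s with hfdef
  -- FTC
  have hFTC : ∀ u v : ℝ, 0 ≤ u → u ≤ v → v ≤ T → φ v - φ u = ∫ x in u..v, φ' x := by
    intro u v hu huv hvT
    have hsub : Set.Icc u v ⊆ Set.Icc 0 T := Set.Icc_subset_Icc hu hvT
    refine (intervalIntegral.integral_eq_sub_of_hasDerivAt (fun x hx => ?_) ?_).symm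
    · rw [Set.uIcc_of_le huv] at hx
      exact hderiv x (hsub hx)
    · apply ContinuousOn.intervalIntegrable
      rw [Set.uIcc_of_le huv]
      exact hcont.mono hsub
  have hφ'int : ∀ u v : ℝ, 0 ≤ u → u ≤ v → v ≤ T → IntervalIntegrable φ' volume u v := by
    intro u v hu huv hvT
    have hsub : Set.Icc u v ⊆ Set.Icc 0 T := Set.Icc_subset_Icc hu hvT
    apply ContinuousOn.intervalIntegrable
    rw [Set.uIcc_of_le huv]
    exact hcont.mono hsub
  have hφdiff : ∀ u v : ℝ, 0 ≤ u → u ≤ v → v ≤ T → |φ v - φ u| ≤ M * (v - u) := by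
    intro u v hu huv hvT
    rw [hFTC u v hu huv hvT]
    have h := intervalIntegral.norm_integral_le_of_norm_le_const (a := u) (b := v) (C := M)
      (f := φ') (fun x hx => by
        rw [Set.uIoc_of_le huv] at hx
        exact hM x ⟨le_trans hu hx.1.le, le_trans hx.2 hvT⟩)
    rw [Real.norm_eq_abs] at h
    rwa [abs_of_nonneg (sub_nonneg.mpr huv)] at h
  have hq_bound : ∀ k j, j ≤ nk k → |q k j| ≤ M := by
    intro k j hj
    have hδ := hΔt k
    have hj' : (j:ℝ) ≤ nk k := by exact_mod_cast hj
    have h1 : (0:ℝ) ≤ ((nk k : ℝ) - j) * Δt k := mul_nonneg (by linarith) hδ.le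
    have h2 : ((nk k : ℝ) - j) * Δt k ≤ ((nk k : ℝ) + 1 - j) * Δt k := by nlinarith
    have h3 : ((nk k : ℝ) + 1 - j) * Δt k ≤ T := by
      have : ((nk k : ℝ) + 1 - j) * Δt k ≤ Tn k := by
        simp only [hTndef]; nlinarith
      linarith [hTn_ltT k]
    have := hφdiff _ _ h1 h2 h3
    have hdiff : ((nk k : ℝ) + 1 - j) * Δt k - ((nk k : ℝ) - j) * Δt k = Δt k := by ring
    rw [hdiff] at this
    simp only [hqdef]
    rw [abs_div, abs_of_pos hδ, div_le_iff₀ hδ]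
    linarith [this]
  -- integrability of the kernel
  have hrpow_int : ∀ a b : ℝ, IntegrableOn (fun s : ℝ => s ^ (-α)) (Set.Ioc a b) := by
    intro a b
    rcases le_or_gt a b with hab | hab
    · have := intervalIntegral.intervalIntegrable_rpow' (a := a) (b := b) hrneg
      rw [intervalIntegrable_iff, Set.uIoc_of_le hab] at this
      exact this
    · rw [Set.Ioc_eq_empty (not_lt.mpr hab.le)]
      exact integrableOn_empty
  have hterm_int : ∀ (c a b : ℝ),
      Integrable (Set.indicator (Set.Ioc a b) (fun s : ℝ => c * s ^ (-α))) := by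
    intro c a b
    exact MeasureTheory.IntegrableOn.integrable_indicator
      (Integrable.const_mul (hrpow_int a b) c) measurableSet_Ioc
  have hf_int : ∀ k, Integrable (f k) := by
    intro k
    simp only [hfdef]
    exact integrable_finset_sum _ (fun j _ => hterm_int _ _ _)
  -- value of the integral of one cell
  have cell_int : ∀ (c a b : ℝ), 0 ≤ a → a ≤ b →
      ∫ s, Set.indicator (Set.Ioc a b) (fun s : ℝ => c * s ^ (-α)) s
        = c * ((b ^ (1-α) - a ^ (1-α)) / (1-α)) := by
    intro c a b ha hab
    rw [MeasureTheory.integral_indicator measurableSet_Ioc,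
      ← intervalIntegral.integral_of_le hab, intervalIntegral.integral_const_mul,
      integral_rpow (Or.inl hrneg)]
    rw [show -α + 1 = 1 - α from by ring]
  -- value of the whole integral
  set S : ℕ → ℝ := fun k => ∑ j ∈ Finset.range (nk k + 1),
    ((((j:ℝ)+1) ^ (1-α) - (j:ℝ) ^ (1-α)) *
      (φ (((nk k:ℝ) + 1 - j) * Δt k) - φ (((nk k:ℝ) - j) * Δt k))) with hSdef
  have hint : ∀ k, ∫ s, f k s = (Δt k ^ (-α) / (1-α)) * S k := by
    intro k
    have hδ := hΔt k
    simp only [hfdef]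
    rw [integral_finset_sum _ (fun j _ => hterm_int _ _ _)]
    rw [hSdef, Finset.mul_sum]
    apply Finset.sum_congr rfl
    intro j hj
    have hj0 : (0:ℝ) ≤ (j:ℝ) * Δt k := mul_nonneg (Nat.cast_nonneg j) hδ.le
    have hjab : (j:ℝ) * Δt k ≤ ((j:ℝ)+1) * Δt k := by nlinarith
    rw [cell_int _ _ _ hj0 hjab]
    have e1 : (((j:ℝ)+1) * Δt k) ^ ((1:ℝ)-α) = ((j:ℝ)+1) ^ ((1:ℝ)-α) * Δt k ^ ((1:ℝ)-α) :=
      Real.mul_rpow (by positivity) hδ.le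
    have e2 : ((j:ℝ) * Δt k) ^ ((1:ℝ)-α) = (j:ℝ) ^ ((1:ℝ)-α) * Δt k ^ ((1:ℝ)-α) :=
      Real.mul_rpow (Nat.cast_nonneg j) hδ.le
    have e3 : Δt k ^ ((1:ℝ)-α) = Δt k ^ (-α) * Δt k := by
      rw [show (1:ℝ) - α = -α + 1 from by ring, Real.rpow_add_one hδ.ne']
    rw [e1, e2, e3, hqdef]
    field_simp
  -- identity between the discrete Caputo quotient and the integral of `f k`
  have hgoal_eq : ∀ k,
      (1 / (Real.Gamma (2 - α) * Δt k ^ α))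
          * (φ (((nk k : ℝ) + 1) * Δt k)
            - ∑ m ∈ Finset.range (nk k + 1), caputoCoeff α (nk k) m * φ ((m : ℝ) * Δt k))
        = (1 / Real.Gamma (1 - α)) * ∫ s, f k s := by
    intro k
    have hδ := hΔt k
    have habel : φ (((nk k + 1 : ℕ):ℝ) * Δt k)
        - ∑ m ∈ Finset.range (nk k + 1), caputoCoeff α (nk k) m * φ ((m : ℝ) * Δt k)
        = ∑ j ∈ Finset.range (nk k + 1),
            ((((j:ℝ)+1) ^ (1-α) - (j:ℝ) ^ (1-α)) *
              (φ (((nk k + 1 - j : ℕ):ℝ) * Δt k) - φ (((nk k - j : ℕ):ℝ) * Δt k))) :=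
      abel_sum' α hα1 (nk k) (fun m => φ ((m:ℝ) * Δt k))
    have hS : φ (((nk k : ℝ) + 1) * Δt k)
        - ∑ m ∈ Finset.range (nk k + 1), caputoCoeff α (nk k) m * φ ((m : ℝ) * Δt k) = S k := by
      have h0 : (((nk k : ℝ)) + 1) = (((nk k + 1 : ℕ)):ℝ) := by push_cast; ring
      rw [h0, habel, hSdef]
      apply Finset.sum_congr rfl
      intro j hj
      have hj' : j ≤ nk k := Nat.lt_succ_iff.mp (Finset.mem_range.mp hj)
      have e1 : ((nk k + 1 - j : ℕ) : ℝ) = (nk k : ℝ) + 1 - j := by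
        rw [Nat.cast_sub (by omega)]; push_cast; ring
      have e2 : ((nk k - j : ℕ) : ℝ) = (nk k : ℝ) - j := by
        rw [Nat.cast_sub hj']
      rw [e1, e2]
    rw [hS, hint k, hΓ2]
    have hδα : Δt k ^ (-α) = (Δt k ^ α)⁻¹ := by
      rw [Real.rpow_neg hδ.le]
    rw [hδα]
    have hne : Δt k ^ α ≠ 0 := (Real.rpow_pos_of_pos hδ α).ne'
    have e : ∀ x : ℝ, 1 / ((1-α) * Real.Gamma (1-α) * Δt k ^ α) * x
        = 1 / Real.Gamma (1-α) * ((Δt k ^ α)⁻¹ / (1-α) * x) := by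
      intro x
      rw [div_mul_eq_mul_div, one_mul, div_mul_eq_mul_div, one_mul]
      rw [eq_div_iff (by positivity : (Real.Gamma (1-α)) ≠ 0)]
      field_simp
    exact e (S k)
  -- cells
  have hcell_sub : ∀ k (j : ℕ), j < nk k + 1 →
      Set.Ioc ((j:ℝ) * Δt k) (((j:ℝ)+1) * Δt k) ⊆ Set.Ioc 0 (Tn k) := by
    intro k j hj
    have hδ := hΔt k
    have hj' : (j:ℝ) + 1 ≤ (nk k : ℝ) + 1 := by
      have : (j:ℝ) ≤ nk k := by exact_mod_cast Nat.lt_succ_iff.mp hj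
      linarith
    intro s hs
    refine ⟨lt_of_le_of_lt (mul_nonneg (Nat.cast_nonneg j) hδ.le) hs.1, le_trans hs.2 ?_⟩
    have : ((j:ℝ)+1) * Δt k ≤ ((nk k : ℝ)+1) * Δt k := by nlinarith
    exact this
  have hf_zero : ∀ k (s : ℝ), s ∉ Set.Ioc 0 (Tn k) → f k s = 0 := by
    intro k s hsn
    simp only [hfdef]
    apply Finset.sum_eq_zero
    intro j hj
    exact Set.indicator_of_notMem
      (fun hmem => hsn (hcell_sub k j (Finset.mem_range.mp hj) hmem)) _
  have hf_eval : ∀ k (s : ℝ) (j : ℕ), j ∈ Finset.range (nk k + 1) →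
      s ∈ Set.Ioc ((j:ℝ) * Δt k) (((j:ℝ)+1) * Δt k) → f k s = q k j * s ^ (-α) := by
    intro k s j hj hs
    simp only [hfdef]
    rw [Finset.sum_eq_single_of_mem j hj]
    · exact Set.indicator_of_mem hs _
    · intro i _ hij
      apply Set.indicator_of_notMem
      intro hmem
      have hδ := hΔt k
      rcases lt_or_gt_of_ne hij with hlt | hgt
      · have hc : ((i:ℝ)+1) ≤ (j:ℝ) := by exact_mod_cast hlt
        nlinarith [hmem.2, hs.1]
      · have hc : ((j:ℝ)+1) ≤ (i:ℝ) := by exact_mod_cast hgt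
        nlinarith [hmem.1, hs.2]
  -- the cell index of a point
  have hjf : ∀ k (s : ℝ), 0 < s → s ≤ Tn k →
      ((⌈s / Δt k⌉ - 1).toNat < nk k + 1 ∧
        ((((⌈s / Δt k⌉ - 1).toNat : ℕ):ℝ) * Δt k < s ∧
          s ≤ ((((⌈s / Δt k⌉ - 1).toNat : ℕ):ℝ) + 1) * Δt k)) := by
    intro k s hs0 hsT
    have hδ := hΔt k
    have hpos : 0 < s / Δt k := div_pos hs0 hδ
    have hge1 : 1 ≤ ⌈s / Δt k⌉ := Int.ceil_pos.mpr hpos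
    have hle : ⌈s / Δt k⌉ ≤ (nk k : ℤ) + 1 := by
      apply Int.ceil_le.mpr
      push_cast
      rw [div_le_iff₀ hδ]
      exact hsT
    have hcast : (((⌈s / Δt k⌉ - 1).toNat : ℕ) : ℝ) = (⌈s / Δt k⌉ : ℝ) - 1 := by
      have h1 : (((⌈s / Δt k⌉ - 1).toNat : ℕ) : ℤ) = ⌈s / Δt k⌉ - 1 :=
        Int.toNat_of_nonneg (by omega)
      exact_mod_cast congrArg (fun z : ℤ => (z : ℝ)) h1
    refine ⟨by omega, ?_, ?_⟩
    · rw [hcast]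
      have h2 : (⌈s / Δt k⌉ : ℝ) - 1 < s / Δt k := by
        have := Int.ceil_lt_add_one (s / Δt k); linarith
      calc ((⌈s / Δt k⌉:ℝ) - 1) * Δt k < (s / Δt k) * Δt k := by
            exact mul_lt_mul_of_pos_right h2 hδ
        _ = s := div_mul_cancel₀ _ hδ.ne'
    · rw [hcast]
      have h2 : s / Δt k ≤ (⌈s / Δt k⌉ : ℝ) := Int.le_ceil _
      have h3 : ((⌈s / Δt k⌉:ℝ) - 1) + 1 = (⌈s/Δt k⌉:ℝ) := by ring
      rw [h3]
      calc s = (s / Δt k) * Δt k := (div_mul_cancel₀ _ hδ.ne').symm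
        _ ≤ (⌈s / Δt k⌉:ℝ) * Δt k := mul_le_mul_of_nonneg_right h2 hδ.le
  -- dominated convergence
  set g : ℝ → ℝ := Set.indicator (Set.Ioc 0 t) (fun s => φ' (t - s) * s ^ (-α)) with hgdef
  set bound : ℝ → ℝ := Set.indicator (Set.Ioc 0 T) (fun s => M * s ^ (-α)) with hbounddef
  have hbound_int : Integrable bound :=
    MeasureTheory.IntegrableOn.integrable_indicator
      (Integrable.const_mul (hrpow_int 0 T) M) measurableSet_Ioc
  have hbound_nonneg : ∀ s, 0 ≤ bound s := by
    intro s
    simp only [hbounddef]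
    apply Set.indicator_nonneg
    intro x hx
    have : 0 < x ^ (-α) := Real.rpow_pos_of_pos hx.1 _
    positivity
  have h_bd : ∀ k, ∀ᵐ (s : ℝ), ‖f k s‖ ≤ bound s := by
    intro k
    apply ae_of_all
    intro s
    rw [Real.norm_eq_abs]
    by_cases hsTn : s ∈ Set.Ioc 0 (Tn k)
    · have hsT : s ∈ Set.Ioc 0 T := ⟨hsTn.1, le_trans hsTn.2 (hTn_ltT k).le⟩
      obtain ⟨hj1, hj2, hj3⟩ := hjf k s hsTn.1 hsTn.2
      rw [hf_eval k s _ (Finset.mem_range.mpr hj1) ⟨hj2, hj3⟩]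
      rw [hbounddef, Set.indicator_of_mem hsT]
      rw [abs_mul]
      have hspos : 0 < s ^ (-α) := Real.rpow_pos_of_pos hsTn.1 _
      rw [abs_of_pos hspos]
      exact mul_le_mul_of_nonneg_right (hq_bound k _ (Nat.lt_succ_iff.mp hj1)) hspos.le
    · rw [hf_zero k s hsTn]
      simpa using hbound_nonneg s
  have h_meas : ∀ k, AEStronglyMeasurable (f k) volume := fun k => (hf_int k).aestronglyMeasurable
  have h_lim : ∀ᵐ (s:ℝ), Tendsto (fun k => f k s) atTop (nhds (g s)) := by
    have h_ne : ∀ᵐ (s:ℝ), s ≠ t := by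
      rw [ae_iff]
      simp only [ne_eq, not_not, Set.setOf_eq_eq_singleton]
      exact Real.volume_singleton
    filter_upwards [h_ne] with s hs
    rcases hs.lt_or_gt with hst | hts
    · by_cases hs0 : 0 < s
      · -- main case : 0 < s < t
        have hgs : g s = φ' (t - s) * s ^ (-α) := by
          rw [hgdef]
          exact Set.indicator_of_mem (Set.mem_Ioc.mpr ⟨hs0, hst.le⟩) _
        rw [hgs]
        have hqt : Tendsto (fun k => q k ((⌈s / Δt k⌉ - 1).toNat)) atTop
            (nhds (φ' (t - s))) := by
          have hcs : t - s ∈ Set.Icc (0:ℝ) T := ⟨by linarith, by linarith⟩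
          rw [Metric.tendsto_atTop]
          intro ε hε
          obtain ⟨η, hη, hcont'⟩ :=
            Metric.continuousWithinAt_iff.mp (hcont _ hcs) (ε/2) (by linarith)
          have habs : Tendsto (fun k => |Tn k - t|) atTop (nhds 0) := by
            have h0 : Tendsto (fun k => Tn k - t) atTop (nhds (t - t)) :=
              hTnt.sub tendsto_const_nhds
            rw [sub_self] at h0
            simpa using h0.abs
          have hev4 : ∀ᶠ k in atTop, s < Tn k ∧ Δt k < η/4 ∧ |Tn k - t| < η/4 :=
            (hTnt.eventually_const_lt hst).and
              ((hΔt0.eventually_lt_const (by linarith)).and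
                (habs.eventually_lt_const (by linarith)))
          rw [eventually_atTop] at hev4
          obtain ⟨N, hN⟩ := hev4
          refine ⟨N, fun k hk => ?_⟩
          obtain ⟨h1, h2, h3⟩ := hN k hk
          obtain ⟨hj1, hj2, hj3⟩ := hjf k s hs0 h1.le
          set j := (⌈s / Δt k⌉ - 1).toNat with hjdef
          have hδ := hΔt k
          have hjn : (j:ℝ) ≤ (nk k : ℝ) := by exact_mod_cast Nat.lt_succ_iff.mp hj1
          set u1 := ((nk k:ℝ) - j) * Δt k with hu1
          set u2 := ((nk k:ℝ) + 1 - j) * Δt k with hu2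
          have hu21 : u2 = u1 + Δt k := by rw [hu1, hu2]; ring
          have hu10 : 0 ≤ u1 := mul_nonneg (by linarith) hδ.le
          have hu12 : u1 ≤ u2 := by rw [hu21]; linarith
          have hu2T : u2 ≤ T := by
            have h6 : (0:ℝ) ≤ (j:ℝ) := Nat.cast_nonneg j
            have h5 : u2 ≤ Tn k := by
              rw [hu2]
              simp only [hTndef]
              exact mul_le_mul_of_nonneg_right (by linarith) hδ.le
            linarith [hTn_ltT k]
          have habs3 := abs_lt.mp h3
          have hu1b : u1 = Tn k - ((j:ℝ)+1) * Δt k := by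
            rw [hu1]; simp only [hTndef]; ring
          have hjd1 : 0 ≤ ((j:ℝ)+1) * Δt k - s := by linarith [hj3]
          have hjd2 : ((j:ℝ)+1) * Δt k - s < Δt k := by
            have he : ((j:ℝ)+1) * Δt k = (j:ℝ) * Δt k + Δt k := by ring
            linarith [hj2]
          have hclose : ∀ v, u1 ≤ v → v ≤ u2 → |v - (t - s)| < η := by
            intro v hv1 hv2
            rw [abs_lt]
            rw [hu1b] at hv1
            rw [hu21, hu1b] at hv2
            constructor
            · linarith [habs3.1]
            · linarith [habs3.2]
          have hFTCk := hFTC u1 u2 hu10 hu12 hu2T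
          have hint1 := hφ'int u1 u2 hu10 hu12 hu2T
          have hsubint : ∫ v in u1..u2, (φ' v - φ' (t - s))
              = (φ u2 - φ u1) - Δt k * φ' (t - s) := by
            rw [intervalIntegral.integral_sub hint1 intervalIntegrable_const,
              intervalIntegral.integral_const, ← hFTCk, hu21]
            simp only [smul_eq_mul]
            ring
          have hest : |∫ v in u1..u2, (φ' v - φ' (t - s))| ≤ (ε/2) * |u2 - u1| := by
            rw [← Real.norm_eq_abs]
            apply intervalIntegral.norm_integral_le_of_norm_le_const
            intro x hx
            rw [Set.uIoc_of_le hu12] at hx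
            have hxI : x ∈ Set.Icc (0:ℝ) T := ⟨le_trans hu10 hx.1.le, le_trans hx.2 hu2T⟩
            have hxd : dist x (t - s) < η := by
              rw [Real.dist_eq]; exact hclose x hx.1.le hx.2
            have h7 := hcont' hxI hxd
            rw [Real.dist_eq] at h7
            rw [Real.norm_eq_abs]
            linarith
          rw [Real.dist_eq]
          have hqj : q k j = (φ u2 - φ u1) / Δt k := by
            simp only [hqdef, hu1, hu2]
          have hqsub : q k j - φ' (t - s)
              = (∫ v in u1..u2, (φ' v - φ' (t - s))) / Δt k := by
            rw [hsubint, hqj]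
            field_simp
          rw [hqsub, abs_div, abs_of_pos hδ, div_lt_iff₀ hδ]
          have h8 : |u2 - u1| = Δt k := by
            rw [hu21]
            simp [abs_of_pos hδ]
          rw [h8] at hest
          nlinarith
        have hev : ∀ᶠ k in atTop, q k ((⌈s / Δt k⌉ - 1).toNat) * s ^ (-α) = f k s := by
          filter_upwards [hTnt.eventually_const_lt hst] with k hk
          obtain ⟨hj1, hj2, hj3⟩ := hjf k s hs0 hk.le
          exact (hf_eval k s _ (Finset.mem_range.mpr hj1) ⟨hj2, hj3⟩).symm
        exact Tendsto.congr' hev (hqt.mul_const _)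
      · push_neg at hs0
        have hgs : g s = 0 := by
          rw [hgdef]
          exact Set.indicator_of_notMem (fun hmem => absurd hmem.1 (not_lt.mpr hs0)) _
        rw [hgs]
        have hz : ∀ k, f k s = 0 := fun k =>
          hf_zero k s (fun hmem => absurd hmem.1 (not_lt.mpr hs0))
        exact Tendsto.congr (fun k => (hz k).symm) tendsto_const_nhds
    · have hgs : g s = 0 := by
        rw [hgdef]
        exact Set.indicator_of_notMem (fun hmem => absurd hmem.2 (not_le.mpr hts)) _
      rw [hgs]
      have hev : ∀ᶠ k in atTop, (0:ℝ) = f k s := by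
        filter_upwards [hTnt.eventually_lt_const hts] with k hk
        exact (hf_zero k s (fun hmem => absurd hmem.2 (not_le.mpr hk))).symm
      exact Tendsto.congr' hev tendsto_const_nhds
  have hdct := MeasureTheory.tendsto_integral_of_dominated_convergence
    bound h_meas hbound_int h_bd h_lim
  have hgint : ∫ s, g s = ∫ s in (0:ℝ)..t, φ' s * (t - s) ^ (-α) := by
    rw [hgdef, MeasureTheory.integral_indicator measurableSet_Ioc,
      ← intervalIntegral.integral_of_le ht0.le]
    have hrefl := intervalIntegral.integral_comp_sub_left (a := (0:ℝ)) (b := t)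
      (fun u => φ' u * (t - u) ^ (-α)) t
    simp only [sub_sub_cancel, sub_zero, sub_self] at hrefl
    exact hrefl
  rw [← hgint]
  exact Tendsto.congr (fun k => (hgoal_eq k).symm)
    (hdct.const_mul (1 / Real.Gamma (1 - α)))
end

section
/- Let α ∈ (0,1), d ≥ 1, and define u_α : (0,∞) × ℝ^d → ℝ by u_α(t,x) = −|x|² − t^{2α}/(α Γ(2α)) − (2/(α Γ(α))) t^α |x|. Then u_α solves the time-fractional eikonal equation ∂_t^α u + |Du| = 0 pointwise at every (t,x) with t > 0 and x ≠ 0: that is, (1/Γ(1−α)) ∫_0^t ∂_s u_α(s,x) (t−s)^{−α} ds + |∇_x u_α(t,x)| = 0, where ∇_x u_α(t,x) = −2x − (2/(α Γ(α))) t^α x/|x|. Moreover u_α(0⁺, x) = −|x|². -/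
open Filter MeasureTheory

open Set intervalIntegral in
lemma betaIntegrableAux {a b t : ℝ} (ha : 0 < a) (hb : 0 < b) (ht : 0 < t) :
    IntervalIntegrable (fun s => s ^ (a - 1) * (t - s) ^ (b - 1)) volume 0 t := by
  apply IntervalIntegrable.trans (b := t / 2)
  · apply (intervalIntegrable_rpow' (by linarith)).mul_continuousOn
    apply (continuousOn_const.sub continuousOn_id).rpow_const
    intro s hs
    rw [uIcc_of_le (by linarith : (0:ℝ) ≤ t/2)] at hs
    exact Or.inl (by show t - s ≠ 0; intro h; nlinarith [hs.2])
  · have h1 : IntervalIntegrable (fun s : ℝ => (t - s) ^ (b - 1)) volume (t/2) t := by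
      have := (intervalIntegrable_rpow' (r := b - 1) (by linarith)
        (a := (0:ℝ)) (b := t/2)).comp_sub_left t
      rw [show t - (0:ℝ) = t by ring, show t - t/2 = t/2 by ring] at this
      exact this.symm
    apply h1.continuousOn_mul
    apply continuousOn_id.rpow_const
    intro s hs
    rw [uIcc_of_le (by linarith : t/2 ≤ t)] at hs
    exact Or.inl (by show s ≠ 0; intro h; nlinarith [hs.1])

lemma betaValAux {a b t : ℝ} (ha : 0 < a) (hb : 0 < b) (ht : 0 < t) :
    ∫ s in (0:ℝ)..t, s ^ (a - 1) * (t - s) ^ (b - 1)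
      = t ^ (a + b - 1) * (Real.Gamma a * Real.Gamma b / Real.Gamma (a + b)) := by
  have hab : (0:ℝ) < a + b := by linarith
  have hG : Real.Gamma (a + b) ≠ 0 := (Real.Gamma_pos_of_pos hab).ne'
  have key : (↑(∫ s in (0:ℝ)..t, s ^ (a - 1) * (t - s) ^ (b - 1)) : ℂ)
      = ∫ s in (0:ℝ)..t, (s : ℂ) ^ ((a : ℂ) - 1) * ((t : ℂ) - s) ^ ((b : ℂ) - 1) := by
    rw [← intervalIntegral.integral_ofReal]
    apply intervalIntegral.integral_congr
    intro s hs
    rw [Set.uIcc_of_le ht.le] at hs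
    have h0 : (0:ℝ) ≤ s := hs.1
    have h1 : (0:ℝ) ≤ t - s := by linarith [hs.2]
    simp only []
    rw [show ((t:ℂ) - s) = ((t - s : ℝ) : ℂ) by push_cast; ring,
      show ((a:ℂ) - 1) = ((a - 1 : ℝ) : ℂ) by push_cast; ring,
      show ((b:ℂ) - 1) = ((b - 1 : ℝ) : ℂ) by push_cast; ring,
      ← Complex.ofReal_cpow h0, ← Complex.ofReal_cpow h1]
    norm_cast
  have hbeta : Complex.betaIntegral (a : ℂ) (b : ℂ)
      = ((Real.Gamma a * Real.Gamma b / Real.Gamma (a + b) : ℝ) : ℂ) := by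
    have h1 := Complex.Gamma_mul_Gamma_eq_betaIntegral (s := (a : ℂ)) (t := (b : ℂ))
      (by simpa using ha) (by simpa using hb)
    have h2 : (a : ℂ) + b = ((a + b : ℝ) : ℂ) := by push_cast; ring
    rw [h2, Complex.Gamma_ofReal, Complex.Gamma_ofReal, Complex.Gamma_ofReal] at h1
    rw [eq_comm, Complex.ofReal_div, Complex.ofReal_mul,
      div_eq_iff (by exact_mod_cast hG)]
    linear_combination h1
  have h3 := Complex.betaIntegral_scaled (a : ℂ) (b : ℂ) ht
  rw [← key, hbeta] at h3
  have h4 : ((t : ℂ)) ^ ((a : ℂ) + b - 1) = ((t ^ (a + b - 1) : ℝ) : ℂ) := by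
    rw [Complex.ofReal_cpow ht.le]
    push_cast
    ring_nf
  rw [h4, ← Complex.ofReal_mul] at h3
  exact_mod_cast h3

/-- the function
`u_α(t,x) = −|x|² − t^{2α}/(αΓ(2α)) − (2/(αΓ(α))) t^α |x|`
solves the time-fractional eikonal equation `∂_t^α u + |Du| = 0` pointwise for `t > 0`,
`x ≠ 0`, where `∇_x u_α(t,x) = −2x − (2/(αΓ(α))) t^α x/|x|`; moreover `u_α(0⁺,x) = −|x|²`. -/
theorem eikonal_explicit_solution (α : ℝ) (hα : α ∈ Set.Ioo (0 : ℝ) 1)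
    (d : ℕ) (hd : 1 ≤ d)
    (u : ℝ → EuclideanSpace ℝ (Fin d) → ℝ)
    (hu : ∀ (t : ℝ) (x : EuclideanSpace ℝ (Fin d)),
      u t x = -‖x‖ ^ 2 - t ^ (2 * α) / (α * Real.Gamma (2 * α))
        - (2 / (α * Real.Gamma α)) * t ^ α * ‖x‖) :
    (∀ (t : ℝ), 0 < t → ∀ x : EuclideanSpace ℝ (Fin d), x ≠ 0 →
      (1 / Real.Gamma (1 - α))
          * (∫ s in (0 : ℝ)..t, deriv (fun s => u s x) s * (t - s) ^ (-α))
        + ‖(-(2 : ℝ)) • x - (2 / (α * Real.Gamma α) * t ^ α / ‖x‖) • x‖ = 0) ∧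
    (∀ x : EuclideanSpace ℝ (Fin d),
      Tendsto (fun t => u t x) (nhdsWithin 0 (Set.Ioi 0)) (nhds (-‖x‖ ^ 2))) := by
  obtain ⟨hα0, hα1⟩ := hα
  have hαn : α ≠ 0 := hα0.ne'
  have hGα : (0:ℝ) < Real.Gamma α := Real.Gamma_pos_of_pos hα0
  have hG2α : (0:ℝ) < Real.Gamma (2 * α) := Real.Gamma_pos_of_pos (by linarith)
  have hG1α : (0:ℝ) < Real.Gamma (1 - α) := Real.Gamma_pos_of_pos (by linarith)
  constructor
  · intro t ht x hx
    have hxn : (0:ℝ) < ‖x‖ := norm_pos_iff.mpr hx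
    have hfun : (fun s => u s x) = fun s : ℝ =>
        -‖x‖ ^ 2 - s ^ (2 * α) / (α * Real.Gamma (2 * α))
          - (2 / (α * Real.Gamma α)) * s ^ α * ‖x‖ := funext fun s => hu s x
    -- derivative on (0, t]
    have hderiv : ∀ s : ℝ, 0 < s → deriv (fun s => u s x) s
        = -2 / Real.Gamma (2 * α) * s ^ (2 * α - 1)
          + (-2 * ‖x‖ / Real.Gamma α) * s ^ (α - 1) := by
      intro s hs
      have p1 : HasDerivAt (fun s : ℝ => s ^ (2 * α)) (2 * α * s ^ (2 * α - 1)) s :=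
        Real.hasDerivAt_rpow_const (Or.inl hs.ne')
      have p2 : HasDerivAt (fun s : ℝ => s ^ α) (α * s ^ (α - 1)) s :=
        Real.hasDerivAt_rpow_const (Or.inl hs.ne')
      have hD : HasDerivAt (fun s : ℝ =>
          -‖x‖ ^ 2 - s ^ (2 * α) / (α * Real.Gamma (2 * α))
            - (2 / (α * Real.Gamma α)) * s ^ α * ‖x‖)
          (0 - 2 * α * s ^ (2 * α - 1) / (α * Real.Gamma (2 * α))
            - 2 / (α * Real.Gamma α) * (α * s ^ (α - 1)) * ‖x‖) s :=
        ((hasDerivAt_const s (-‖x‖ ^ 2)).sub (p1.div_const _)).sub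
          ((p2.const_mul _).mul_const _)
      rw [hfun, hD.deriv]
      field_simp
      ring
    -- the two beta integrals
    have I1 : ∫ s in (0:ℝ)..t, s ^ (2 * α - 1) * (t - s) ^ (-α)
        = t ^ α * (Real.Gamma (2 * α) * Real.Gamma (1 - α) / Real.Gamma (α + 1)) := by
      have h := betaValAux (a := 2 * α) (b := 1 - α) (by linarith) (by linarith) ht
      rw [show (1 - α) - 1 = -α by ring, show 2 * α + (1 - α) - 1 = α by ring,
        show 2 * α + (1 - α) = α + 1 by ring] at h
      exact h
    have I2 : ∫ s in (0:ℝ)..t, s ^ (α - 1) * (t - s) ^ (-α)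
        = Real.Gamma α * Real.Gamma (1 - α) := by
      have h := betaValAux (a := α) (b := 1 - α) hα0 (by linarith) ht
      rw [show (1 - α) - 1 = -α by ring, show α + (1 - α) - 1 = (0:ℝ) by ring,
        show α + (1 - α) = (1:ℝ) by ring, Real.rpow_zero, Real.Gamma_one] at h
      simpa using h
    have int1 : IntervalIntegrable (fun s => s ^ (2 * α - 1) * (t - s) ^ (-α)) volume 0 t := by
      have h := betaIntegrableAux (a := 2 * α) (b := 1 - α) (by linarith) (by linarith) ht
      rwa [show (1 - α) - 1 = -α by ring, show 2 * α - 1 = 2 * α - 1 by ring] at h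
    have int2 : IntervalIntegrable (fun s => s ^ (α - 1) * (t - s) ^ (-α)) volume 0 t := by
      have h := betaIntegrableAux (a := α) (b := 1 - α) hα0 (by linarith) ht
      rwa [show (1 - α) - 1 = -α by ring] at h
    have hsplit : ∫ s in (0:ℝ)..t, deriv (fun s => u s x) s * (t - s) ^ (-α)
        = (-2 / Real.Gamma (2 * α)) * (∫ s in (0:ℝ)..t, s ^ (2 * α - 1) * (t - s) ^ (-α))
          + (-2 * ‖x‖ / Real.Gamma α) * (∫ s in (0:ℝ)..t, s ^ (α - 1) * (t - s) ^ (-α)) := by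
      rw [← intervalIntegral.integral_const_mul, ← intervalIntegral.integral_const_mul,
        ← intervalIntegral.integral_add (int1.const_mul _) (int2.const_mul _)]
      apply intervalIntegral.integral_congr_ae
      filter_upwards with s hs
      rw [Set.uIoc_of_le ht.le] at hs
      rw [hderiv s hs.1]
      ring
    have hnorm : ‖(-(2 : ℝ)) • x - (2 / (α * Real.Gamma α) * t ^ α / ‖x‖) • x‖
        = 2 * ‖x‖ + 2 / (α * Real.Gamma α) * t ^ α := by
      set c : ℝ := 2 / (α * Real.Gamma α) * t ^ α / ‖x‖ with hc
      have hcnn : 0 ≤ c := by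
        apply div_nonneg _ hxn.le
        positivity
      rw [← sub_smul, norm_smul, Real.norm_eq_abs, abs_of_nonpos (by linarith)]
      have : c * ‖x‖ = 2 / (α * Real.Gamma α) * t ^ α := by
        rw [hc, div_mul_cancel₀ _ hxn.ne']
      nlinarith [this]
    rw [hsplit, I1, I2, hnorm, Real.Gamma_add_one hαn]
    field_simp
    ring
  · intro x
    have hfun : (fun t => u t x) = fun t : ℝ =>
        -‖x‖ ^ 2 - t ^ (2 * α) / (α * Real.Gamma (2 * α))
          - (2 / (α * Real.Gamma α)) * t ^ α * ‖x‖ := funext fun t => hu t x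
    rw [hfun]
    have key : ∀ β : ℝ, 0 < β →
        Tendsto (fun t : ℝ => t ^ β) (nhdsWithin 0 (Set.Ioi 0)) (nhds 0) := by
      intro β hβ
      have := (Real.continuousAt_rpow_const 0 β (Or.inr hβ.le)).tendsto
      rw [Real.zero_rpow hβ.ne'] at this
      exact this.mono_left nhdsWithin_le_nhds
    have h := ((tendsto_const_nhds (x := -‖x‖ ^ 2)).sub
        ((key (2 * α) (by linarith)).div_const (α * Real.Gamma (2 * α)))).sub
        (((key α hα0).const_mul (2 / (α * Real.Gamma α))).mul_const ‖x‖)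
    simpa using h
end
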